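/- arXiv:2509.07255 — 2 statements merged into one kernel-verified Lean document; each statement's English description precedes it below -/
import Mathlib

section
/- Let X₁,…,X_N be independent exponential random variables with means μ₁,…,μ_N satisfying Σμᵢ² ≤ A² and max μᵢ ≤ B. Fix a > 1 and γ = a·e^{1/a}/(a+1) + 2/(e(a³-a)) - 1. Then Pr[Σ Xᵢ ≥ t + Σ μᵢ] ≤ exp(-t²/(4γa²A²)) if t ≤ 2γaA²/B, and Pr[Σ Xᵢ ≥ t + Σ μᵢ] ≤ exp(-(t/(aB) - γA²/B²)) if t ≥ 2γaA²/B. -/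
/-!
Chernoff's method. For `0 ≤ y := l μᵢ ≤ 1/a` the moment generating function of `Xᵢ` at `l` is
`(1 - y)⁻¹ ≤ exp (y + γ a² y²)`, which follows from `e^{-y} - 1 + y ≤ γ a² y² (1 - y)`.
The ratio `(e^{-y} - 1 + y) / (y² (1 - y))` is increasing on `(0, 1)`, so it suffices to check
`y = 1/a`, where the inequality becomes `e^{-x}(1 + x) - e^x(1 - x) ≤ 2x³/e` for `x = 1/a`
(the ratio of the two sides is again increasing in `x ∈ (0, 1]`, with equality at `x = 1`).
Multiplying over `i` gives `Pr[Σ Xᵢ ≥ t + Σ μᵢ] ≤ exp (-l t + γ a² l² A²)` whenever `l B ≤ 1/a`;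
take `l = t / (2γa²A²)` in the first regime and `l = 1/(aB)` in the second.
-/

open MeasureTheory ProbabilityTheory

open Real Set

theorem monotoneOn_div_of_hasDerivAt {D : Set ℝ} (hD : Convex ℝ D) {u v u' v' : ℝ → ℝ}
    (hu : ContinuousOn u D) (hv : ContinuousOn v D) (hv0 : ∀ x ∈ D, v x ≠ 0)
    (hu' : ∀ x ∈ interior D, HasDerivAt u (u' x) x)
    (hv' : ∀ x ∈ interior D, HasDerivAt v (v' x) x)
    (h : ∀ x ∈ interior D, 0 ≤ u' x * v x - u x * v' x) :
    MonotoneOn (fun x => u x / v x) D := by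
  have hderiv (x) (hx : x ∈ interior D) :
      HasDerivAt (fun x => u x / v x) ((u' x * v x - u x * v' x) / v x ^ 2) x :=
    (hu' x hx).div (hv' x hx) (hv0 x (interior_subset hx))
  refine monotoneOn_of_deriv_nonneg hD (hu.div hv hv0)
    (fun x hx => (hderiv x hx).differentiableAt.differentiableWithinAt) fun x hx => ?_
  rw [(hderiv x hx).deriv]
  exact div_nonneg (h x hx) (sq_nonneg _)

/-- `(t² + 3t + 3) / (t² - 3t + 3)` is the `[2/2]` Padé approximant of `e^{2t}`. -/
theorem exp_neg_mul_le_exp_mul {t : ℝ} (ht : 0 ≤ t) :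
    exp (-t) * (t ^ 2 + 3 * t + 3) ≤ exp t * (t ^ 2 - 3 * t + 3) := by
  have htaylor : 1 + 2 * t + (2 * t) ^ 2 / 2 + (2 * t) ^ 3 / 6 + (2 * t) ^ 4 / 24
      + (2 * t) ^ 5 / 120 + (2 * t) ^ 6 / 720 + (2 * t) ^ 7 / 5040 ≤ exp (2 * t) := by
    have h := sum_le_exp_of_nonneg (by positivity : 0 ≤ 2 * t) 8
    norm_num [Finset.sum_range_succ, Nat.factorial] at h
    linarith
  have hq : 0 < t ^ 2 - 3 * t + 3 := by nlinarith [sq_nonneg (2 * t - 3)]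
  have hpade : t ^ 2 + 3 * t + 3 ≤ exp (2 * t) * (t ^ 2 - 3 * t + 3) := by
    nlinarith [mul_le_mul_of_nonneg_right htaylor hq.le, pow_nonneg ht 5, pow_nonneg ht 6,
      pow_nonneg ht 7, pow_nonneg ht 8, pow_nonneg ht 9]
  have hexp : exp (-t) * exp (2 * t) = exp t := by rw [← exp_add]; ring_nf
  calc exp (-t) * (t ^ 2 + 3 * t + 3)
      ≤ exp (-t) * (exp (2 * t) * (t ^ 2 - 3 * t + 3)) := by gcongr
    _ = exp t * (t ^ 2 - 3 * t + 3) := by rw [← mul_assoc, hexp]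

theorem exp_neg_mul_one_add_sub_exp_mul_one_sub_le {x : ℝ} (hx0 : 0 < x) (hx1 : x ≤ 1) :
    exp (-x) * (1 + x) - exp x * (1 - x) ≤ 2 * x ^ 3 * exp (-1) := by
  have hmono : MonotoneOn (fun t => (exp (-t) * (1 + t) - exp t * (1 - t)) / t ^ 3)
      (Ioc 0 1) := by
    refine monotoneOn_div_of_hasDerivAt (convex_Ioc 0 1) (by fun_prop) (by fun_prop)
      (fun t ht => (pow_pos ht.1 3).ne') (u' := fun t => t * (exp t - exp (-t)))
      (v' := fun t => 3 * t ^ 2) (fun t _ => ?_) (fun t _ => by simpa using hasDerivAt_pow 3 t)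
      (fun t ht => ?_)
    · have := (((hasDerivAt_neg t).exp.mul ((hasDerivAt_id t).const_add 1)).sub
        ((hasDerivAt_exp t).mul ((hasDerivAt_id t).const_sub 1)))
      exact this.congr_deriv (by simp; ring)
    · rw [interior_Ioc] at ht
      have key := exp_neg_mul_le_exp_mul ht.1.le
      have : t * (exp t - exp (-t)) * t ^ 3 - (exp (-t) * (1 + t) - exp t * (1 - t)) * (3 * t ^ 2)
          = t ^ 2 * (exp t * (t ^ 2 - 3 * t + 3) - exp (-t) * (t ^ 2 + 3 * t + 3)) := by ring
      rw [this]
      exact mul_nonneg (sq_nonneg t) (by linarith)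
  have h := hmono ⟨hx0, hx1⟩ ⟨one_pos, le_rfl⟩ hx1
  norm_num at h
  rw [div_le_iff₀ (by positivity)] at h
  linarith

theorem exp_neg_mul_two_sub_le {y : ℝ} (hy : 0 ≤ y) :
    exp (-y) * (2 - 2 * y - y ^ 2) ≤ 2 * (1 - y) ^ 2 := by
  have htaylor : 1 + y + y ^ 2 / 2 ≤ exp y := by
    have h := sum_le_exp_of_nonneg hy 3
    norm_num [Finset.sum_range_succ, Nat.factorial] at h
    linarith
  rw [exp_neg, inv_mul_le_iff₀ (exp_pos y)]
  nlinarith [mul_le_mul_of_nonneg_left htaylor (by positivity : (0 : ℝ) ≤ 2 * (1 - y) ^ 2),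
    sq_nonneg (y * y)]

theorem monotoneOn_exp_neg_sub_one_add_div :
    MonotoneOn (fun y => (exp (-y) - 1 + y) / (y ^ 2 * (1 - y))) (Ioo 0 1) := by
  refine monotoneOn_div_of_hasDerivAt (convex_Ioo 0 1) (by fun_prop) (by fun_prop)
    (fun y hy => (mul_pos (pow_pos hy.1 2) (sub_pos.2 hy.2)).ne')
    (u' := fun y => 1 - exp (-y)) (v' := fun y => 2 * y - 3 * y ^ 2) (fun y _ => ?_)
    (fun y _ => ?_) (fun y hy => ?_)
  · exact ((((hasDerivAt_neg y).exp).sub_const 1).add (hasDerivAt_id y)).congr_deriv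
      (by simp; ring)
  · exact ((hasDerivAt_pow 2 y).mul ((hasDerivAt_id y).const_sub 1)).congr_deriv (by simp; ring)
  · rw [interior_Ioo] at hy
    have key := exp_neg_mul_two_sub_le hy.1.le
    have : (1 - exp (-y)) * (y ^ 2 * (1 - y)) - (exp (-y) - 1 + y) * (2 * y - 3 * y ^ 2)
        = y * (2 * (1 - y) ^ 2 - exp (-y) * (2 - 2 * y - y ^ 2)) := by ring
    rw [this]
    exact mul_nonneg hy.1.le (by linarith)

noncomputable def expBernsteinConst (a : ℝ) : ℝ :=
  a * exp (1 / a) / (a + 1) + 2 / (exp 1 * (a ^ 3 - a)) - 1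

theorem expBernsteinConst_pos {a : ℝ} (ha : 1 < a) : 0 < expBernsteinConst a := by
  have ha0 : 0 < a := by linarith
  have hfirst : 1 < a * exp (1 / a) / (a + 1) := by
    rw [one_lt_div (by linarith)]
    calc a + 1 = a * (1 / a + 1) := by field_simp; ring
      _ < a * exp (1 / a) := by gcongr; exact add_one_lt_exp (by positivity)
  have hsecond : 0 < 2 / (exp 1 * (a ^ 3 - a)) := by
    have : 0 < a ^ 3 - a := by nlinarith [mul_pos ha0 (sub_pos.2 ha)]
    positivity
  rw [expBernsteinConst]
  linarith

theorem exp_neg_inv_sub_one_add_inv_le {a : ℝ} (ha : 1 < a) :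
    exp (-(1 / a)) - 1 + 1 / a ≤ expBernsteinConst a * (1 - 1 / a) := by
  have ha0 : 0 < a := by linarith
  have h := exp_neg_mul_one_add_sub_exp_mul_one_sub_le (x := 1 / a) (by positivity)
    ((div_le_one ha0).2 ha.le)
  rw [expBernsteinConst]
  have ha2 : 0 < a ^ 2 - 1 := by nlinarith
  rw [exp_neg 1] at h
  field_simp at h ⊢
  nlinarith [h, exp_pos 1]

theorem exp_neg_sub_one_add_le {a y : ℝ} (ha : 1 < a) (hy0 : 0 ≤ y) (hy : y ≤ 1 / a) :
    exp (-y) - 1 + y ≤ expBernsteinConst a * a ^ 2 * (y ^ 2 * (1 - y)) := by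
  obtain rfl | hy0 := hy0.eq_or_lt
  · simp
  have ha0 : 0 < a := by linarith
  have hinv : 1 / a < 1 := (div_lt_one ha0).2 ha
  have hvy : 0 < y ^ 2 * (1 - y) := mul_pos (pow_pos hy0 2) (by linarith)
  have hvinv : 0 < (1 / a) ^ 2 * (1 - 1 / a) := mul_pos (by positivity) (by linarith)
  have hmono := monotoneOn_exp_neg_sub_one_add_div ⟨hy0, hy.trans_lt hinv⟩
    ⟨by positivity, hinv⟩ hy
  have hend : (exp (-(1 / a)) - 1 + 1 / a) / ((1 / a) ^ 2 * (1 - 1 / a))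
      ≤ expBernsteinConst a * a ^ 2 := by
    rw [div_le_iff₀ hvinv]
    calc exp (-(1 / a)) - 1 + 1 / a ≤ expBernsteinConst a * (1 - 1 / a) :=
          exp_neg_inv_sub_one_add_inv_le ha
      _ = expBernsteinConst a * a ^ 2 * ((1 / a) ^ 2 * (1 - 1 / a)) := by field_simp
  exact (div_le_iff₀ hvy).1 (hmono.trans hend)

theorem inv_one_sub_le_exp {a y : ℝ} (ha : 1 < a) (hy0 : 0 ≤ y) (hy : y ≤ 1 / a) :
    (1 - y)⁻¹ ≤ exp (y + expBernsteinConst a * a ^ 2 * y ^ 2) := by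
  set c := expBernsteinConst a * a ^ 2 * y ^ 2
  have hy1 : 0 < 1 - y := sub_pos.2 (hy.trans_lt ((div_lt_one (by linarith)).2 ha))
  have h := exp_neg_sub_one_add_le ha hy0 hy
  have hexp : exp (-y) ≤ (1 - y) * exp c := by
    calc exp (-y) ≤ (1 - y) * (1 + c) := by linarith
      _ ≤ (1 - y) * exp c := by gcongr; linarith [add_one_le_exp c]
  rw [inv_le_iff_one_le_mul₀ hy1]
  calc 1 = exp y * exp (-y) := by rw [← exp_add, add_neg_cancel, exp_zero]
    _ ≤ exp y * ((1 - y) * exp c) := by gcongr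
    _ = exp (y + c) * (1 - y) := by rw [exp_add]; ring

theorem exponentialPDF_toReal_smul_exp {r : ℝ} (hr : 0 < r) (l : ℝ) :
    (fun x => (exponentialPDF r x).toReal • exp (l * x))
      = (Ici 0).indicator fun x => r * exp ((l - r) * x) := by
  ext x
  by_cases hx : 0 ≤ x
  · rw [exponentialPDF_of_nonneg hx, indicator_of_mem (mem_Ici.2 hx),
      ENNReal.toReal_ofReal (by positivity), smul_eq_mul, mul_assoc, ← exp_add]
    ring_nf
  · simp [exponentialPDF_of_neg (not_le.1 hx), hx]

theorem mgf_id_expMeasure {r l : ℝ} (hr : 0 < r) (hl : l < r) :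
    mgf id (expMeasure r) l = r / (r - l) := by
  change ∫ x, exp (l * x) ∂volume.withDensity (exponentialPDF r) = r / (r - l)
  rw [integral_withDensity_eq_integral_toReal_smul (f := exponentialPDF r)
      (measurable_exponentialPDFReal r).ennreal_ofReal (ae_of_all _ fun _ => ENNReal.ofReal_lt_top),
    exponentialPDF_toReal_smul_exp hr,
    integral_indicator measurableSet_Ici, integral_Ici_eq_integral_Ioi, integral_const_mul,
    integral_exp_mul_Ioi (by linarith), mul_zero, exp_zero, ← neg_sub r l, neg_div_neg_eq,
    mul_one_div]

section MapEqExpMeasure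

variable {Ω : Type*} [MeasurableSpace Ω] {P : Measure Ω} {X : Ω → ℝ} {r : ℝ}

theorem aemeasurable_of_map_eq_expMeasure (hr : 0 < r) (hX : P.map X = expMeasure r) :
    AEMeasurable X P :=
  have := isProbabilityMeasure_expMeasure hr
  aemeasurable_of_map_neZero (by rw [hX]; infer_instance)

theorem mgf_of_map_eq_expMeasure (hr : 0 < r) (hX : P.map X = expMeasure r) {l : ℝ}
    (hl : l < r) : mgf X P l = r / (r - l) := by
  rw [← mgf_id_map (aemeasurable_of_map_eq_expMeasure hr hX), hX, mgf_id_expMeasure hr hl]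

end MapEqExpMeasure

theorem measureReal_sum_ge_le_exp {ι Ω : Type*} [Fintype ι] [MeasurableSpace Ω] {P : Measure Ω}
    [IsProbabilityMeasure P] {X : ι → Ω → ℝ} (hindep : iIndepFun X P)
    (hmeas : ∀ i, AEMeasurable (X i) P) {l : ℝ} (hl : 0 ≤ l) {m v : ι → ℝ}
    (hpos : ∀ i, 0 < mgf (X i) P l) (hmgf : ∀ i, mgf (X i) P l ≤ exp (l * m i + v i)) (t : ℝ) :
    P.real {ω | t + ∑ i, m i ≤ ∑ i, X i ω} ≤ exp (-(l * t) + ∑ i, v i) := by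
  have hsum : mgf (∑ i, X i) P l = ∏ i, mgf (X i) P l := hindep.mgf_sum₀ hmeas _
  have hint : Integrable (fun ω => exp (l * (∑ i, X i) ω)) P := by
    rw [← mgf_pos_iff, hsum]
    exact Finset.prod_pos fun i _ => hpos i
  have hprod : ∏ i, mgf (X i) P l ≤ exp (l * ∑ i, m i + ∑ i, v i) := by
    rw [Finset.mul_sum, ← Finset.sum_add_distrib, exp_sum]
    exact Finset.prod_le_prod (fun i _ => (hpos i).le) fun i _ => hmgf i
  calc P.real {ω | t + ∑ i, m i ≤ ∑ i, X i ω}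
      = P.real {ω | t + ∑ i, m i ≤ (∑ i, X i) ω} := by simp only [Finset.sum_apply]
    _ ≤ exp (-l * (t + ∑ i, m i)) * mgf (∑ i, X i) P l := measure_ge_le_exp_mul_mgf _ hl hint
    _ ≤ exp (-l * (t + ∑ i, m i)) * exp (l * ∑ i, m i + ∑ i, v i) := by rw [hsum]; gcongr
    _ = exp (-(l * t) + ∑ i, v i) := by rw [← exp_add]; ring_nf

theorem measureReal_sum_ge_le_of_map_eq_expMeasure {ι Ω : Type*} [Fintype ι] [MeasurableSpace Ω]
    {P : Measure Ω} [IsProbabilityMeasure P] {X : ι → Ω → ℝ} {μs : ι → ℝ}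
    (hμpos : ∀ i, 0 < μs i) (hindep : iIndepFun X P)
    (hlaw : ∀ i, P.map (X i) = expMeasure (μs i)⁻¹) {a l : ℝ} (ha : 1 < a) (hl : 0 ≤ l)
    (hlμ : ∀ i, l * μs i ≤ 1 / a) (t : ℝ) :
    P.real {ω | t + ∑ i, μs i ≤ ∑ i, X i ω}
      ≤ exp (-(l * t) + expBernsteinConst a * a ^ 2 * l ^ 2 * ∑ i, μs i ^ 2) := by
  have hlμ1 (i) : l * μs i < 1 := (hlμ i).trans_lt ((div_lt_one (by linarith)).2 ha)
  have hmgf (i) : mgf (X i) P l = (1 - l * μs i)⁻¹ := by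
    have hl' : l < (μs i)⁻¹ := by rw [← one_div, lt_div_iff₀ (hμpos i)]; exact hlμ1 i
    rw [mgf_of_map_eq_expMeasure (inv_pos.2 (hμpos i)) (hlaw i) hl']
    have := hμpos i
    field_simp
  have h := measureReal_sum_ge_le_exp hindep
    (fun i => aemeasurable_of_map_eq_expMeasure (inv_pos.2 (hμpos i)) (hlaw i)) hl (m := μs)
    (v := fun i => expBernsteinConst a * a ^ 2 * (l * μs i) ^ 2)
    (fun i => by rw [hmgf]; exact inv_pos.2 (sub_pos.2 (hlμ1 i)))
    (fun i => by rw [hmgf]; exact inv_one_sub_le_exp ha (mul_nonneg hl (hμpos i).le) (hlμ i)) t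
  convert h using 3
  rw [Finset.mul_sum]
  exact Finset.sum_congr rfl fun i _ => by ring

/-- Bernstein-type concentration for sums of independent exponential random variables.
Let `X₁, …, X_N` be independent exponential random variables with means `μ₁, …, μ_N`
satisfying `Σ μᵢ² ≤ A²` and `max μᵢ ≤ B`.  Fix `a > 1` and
`γ = a e^{1/a}/(a+1) + 2/(e(a³-a)) - 1`.  Then
`Pr[Σ Xᵢ ≥ t + Σ μᵢ] ≤ exp (-t²/(4γa²A²))` whenever `0 ≤ t ≤ 2γaA²/B`, and
`Pr[Σ Xᵢ ≥ t + Σ μᵢ] ≤ exp (-(t/(aB) - γA²/B²))` whenever `t ≥ 2γaA²/B`. -/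
theorem exp_sum_concentration
    {Ω : Type*} [MeasurableSpace Ω] (P : Measure Ω) [IsProbabilityMeasure P]
    (N : ℕ) (X : Fin N → Ω → ℝ) (μs : Fin N → ℝ)
    (hμpos : ∀ i, 0 < μs i)
    (hindep : iIndepFun X P)
    (hlaw : ∀ i, Measure.map (X i) P = expMeasure (μs i)⁻¹)
    (A B : ℝ) (hA : 0 < A) (hA2 : ∑ i, μs i ^ 2 ≤ A ^ 2) (hB : ∀ i, μs i ≤ B)
    (a γ : ℝ) (ha : 1 < a)
    (hγ : γ = a * Real.exp (1 / a) / (a + 1) + 2 / (Real.exp 1 * (a ^ 3 - a)) - 1)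
    (t : ℝ) (ht : 0 ≤ t) :
    (t ≤ 2 * γ * a * A ^ 2 / B →
      (P {ω | t + ∑ i, μs i ≤ ∑ i, X i ω}).toReal
        ≤ Real.exp (-(t ^ 2 / (4 * γ * a ^ 2 * A ^ 2)))) ∧
    (2 * γ * a * A ^ 2 / B ≤ t →
      (P {ω | t + ∑ i, μs i ≤ ∑ i, X i ω}).toReal
        ≤ Real.exp (-(t / (a * B) - γ * A ^ 2 / B ^ 2))) := by
  obtain rfl : γ = expBernsteinConst a := hγ
  have hγpos := expBernsteinConst_pos ha
  have ha0 : 0 < a := by linarith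
  have tail (l : ℝ) (hl : 0 ≤ l) (hlB : l * B ≤ 1 / a) :
      (P {ω | t + ∑ i, μs i ≤ ∑ i, X i ω}).toReal
        ≤ exp (-(l * t) + expBernsteinConst a * a ^ 2 * l ^ 2 * A ^ 2) := by
    refine (measureReal_sum_ge_le_of_map_eq_expMeasure hμpos hindep hlaw ha hl
      (fun i => (mul_le_mul_of_nonneg_left (hB i) hl).trans hlB) t).trans ?_
    gcongr
  constructor
  · intro htB
    have hlB : t / (2 * expBernsteinConst a * a ^ 2 * A ^ 2) * B ≤ 1 / a := by
      rcases le_or_gt B 0 with hB0 | hB0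
      · exact (mul_nonpos_of_nonneg_of_nonpos (by positivity) hB0).trans (by positivity)
      rw [le_div_iff₀ hB0] at htB
      rw [div_mul_eq_mul_div, div_le_div_iff₀ (by positivity) ha0]
      nlinarith
    convert tail _ (by positivity) hlB using 2
    field_simp
    ring
  · intro htB
    rcases le_or_gt B 0 with hB0 | hB0
    · refine measureReal_le_one.trans (one_le_exp ?_)
      have : t / (a * B) ≤ 0 := div_nonpos_of_nonneg_of_nonpos ht (by nlinarith)
      have : 0 ≤ expBernsteinConst a * A ^ 2 / B ^ 2 := by positivity
      linarith
    · convert tail (a * B)⁻¹ (by positivity) (le_of_eq (by field_simp)) using 2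
      field_simp
      ring
end

section
/- Let M be a 2ⁿ × 2ⁿ positive semidefinite complex matrix with trace 1 (a density matrix) that arises as a convex mixture of rank-one projectors U†|g(U)⟩⟨g(U)|U over a distribution 𝒰 on unitaries. Then ‖M‖_F² ≤ E_{U₁,U₂∼𝒰}[ max_{z₁,z₂ ∈ {0,1}ⁿ} |⟨z₁|U₁U₂†|z₂⟩|² ], where M = E_{U∼𝒰}[U†|g(U)⟩⟨g(U)|U] and g maps unitaries to computational basis strings. -/
open MeasureTheory Matrix

/-- Computational basis strings on `n` qubits. -/
abbrev BV (n : ℕ) := Fin n → Fin 2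

noncomputable instance {m k : Type*} : MeasurableSpace (Matrix m k ℂ) :=
  inferInstanceAs (MeasurableSpace (m → k → ℂ))

/-- The matrix `M(g;𝒰) = E_{U∼𝒰}[U† |g(U)⟩⟨g(U)| U]`, defined entrywise. -/
noncomputable def Mmat {n : ℕ} (μ : Measure (Matrix.unitaryGroup (BV n) ℂ))
    (g : Matrix.unitaryGroup (BV n) ℂ → BV n) : Matrix (BV n) (BV n) ℂ :=
  fun i j =>
    ∫ U, ((((U : Matrix (BV n) (BV n) ℂ))ᴴ *
        Matrix.single (g U) (g U) (1:ℂ) * (U : Matrix (BV n) (BV n) ℂ)) i j) ∂μ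

/-- Squared Frobenius norm of a matrix. -/
noncomputable def frobSq {n : ℕ} (A : Matrix (BV n) (BV n) ℂ) : ℝ :=
  ∑ i, ∑ j, ‖A i j‖ ^ 2

/-!
Write `u(U)` for the row `g(U)` of `U`. Entrywise `M_ij = E[conj (u_i) u_j]`, and the squared
modulus of an expectation is the expectation over two independent copies:
`|E X|² = E_{U₁,U₂}[X(U₁) conj X(U₂)]`. Summing over `i, j` factorises the integrand as
`|⟨u(U₁), u(U₂)⟩|² = |(U₁U₂†)_{g(U₁) g(U₂)}|²`, which is at most the maximum over all entries.
-/

open ComplexConjugate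

lemma conjTranspose_mul_single_mul_apply {m α : Type*} [Fintype m] [DecidableEq m] [Semiring α]
    [StarRing α] (U : Matrix m m α) (z i j : m) :
    (Uᴴ * single z z (1 : α) * U) i j = star (U z i) * U z j := by
  simp [Matrix.mul_apply, Matrix.single, ite_and, Finset.sum_ite_eq]

lemma RCLike.sum_sum_re_mul_conj_eq_sq_norm_sum {m 𝕜 : Type*} [Fintype m] [RCLike 𝕜]
    (a b : m → 𝕜) :
    ∑ i, ∑ j, re (conj (a i) * a j * conj (conj (b i) * b j))
      = ‖∑ k, a k * conj (b k)‖ ^ 2 := by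
  have h : ∑ i, ∑ j, conj (a i) * a j * conj (conj (b i) * b j)
      = conj (∑ k, a k * conj (b k)) * ∑ k, a k * conj (b k) := by
    simp only [map_sum, map_mul, RCLike.conj_conj, Finset.sum_mul_sum]
    exact Finset.sum_congr rfl fun i _ => Finset.sum_congr rfl fun j _ => by ring
  simp only [← map_sum, h, RCLike.conj_mul]
  norm_cast

lemma le_ciSup₂_of_finite {ι κ α : Type*} [Finite ι] [Finite κ]
    [ConditionallyCompleteLattice α] (f : ι → κ → α) (i : ι) (j : κ) : f i j ≤ ⨆ i, ⨆ j, f i j :=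
  le_ciSup₂ (Set.finite_iUnion fun _ => Set.finite_range _).bddAbove i j

section SquaredNormIntegral

variable {α 𝕜 : Type*} [MeasurableSpace α] [RCLike 𝕜] {μ : Measure α} {f : α → 𝕜}

lemma MeasureTheory.Integrable.mul_conj_prod (hf : Integrable f μ) :
    Integrable (fun p : α × α => f p.1 * conj (f p.2)) (μ.prod μ) :=
  hf.mul_prod (RCLike.conjCLE.toContinuousLinearMap.integrable_comp hf)

lemma sq_norm_integral_eq_integral_prod [SFinite μ] (hf : Integrable f μ) :
    ‖∫ x, f x ∂μ‖ ^ 2 = ∫ p, RCLike.re (f p.1 * conj (f p.2)) ∂(μ.prod μ) := by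
  rw [integral_re hf.mul_conj_prod, integral_prod_mul f (fun x => conj (f x)), integral_conj,
    RCLike.mul_conj]
  norm_cast

end SquaredNormIntegral

section UnitaryGroup

variable {m : Type*} [Fintype m] [DecidableEq m]

lemma measurable_unitaryGroup_apply (i j : m) :
    Measurable fun U : unitaryGroup m ℂ => (U : Matrix m m ℂ) i j :=
  (measurable_pi_apply j).comp ((measurable_pi_apply i).comp measurable_subtype_coe)

lemma Measurable.unitaryGroup_apply_row [MeasurableSpace m] [MeasurableSingletonClass m]
    {g : unitaryGroup m ℂ → m} (hg : Measurable g) (i : m) :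
    Measurable fun U : unitaryGroup m ℂ => (U : Matrix m m ℂ) (g U) i :=
  (measurable_from_prod_countable_right fun z => measurable_unitaryGroup_apply z i
    : Measurable fun p : m × unitaryGroup m ℂ => (p.2 : Matrix m m ℂ) p.1 i).comp
    (hg.prodMk measurable_id)

lemma integrable_conj_apply_row_mul_apply_row [MeasurableSpace m] [MeasurableSingletonClass m]
    {μ : Measure (unitaryGroup m ℂ)} [IsFiniteMeasure μ] {g : unitaryGroup m ℂ → m}
    (hg : Measurable g) (i j : m) :
    Integrable (fun U : unitaryGroup m ℂ =>
      conj ((U : Matrix m m ℂ) (g U) i) * (U : Matrix m m ℂ) (g U) j) μ := by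
  refine .of_bound ((continuous_star.measurable.comp (hg.unitaryGroup_apply_row i)).mul
    (hg.unitaryGroup_apply_row j)).aestronglyMeasurable 1 (ae_of_all _ fun U => ?_)
  rw [norm_mul, RCLike.norm_conj]
  exact mul_le_one₀ (entry_norm_bound_of_unitary U.2 _ _) (norm_nonneg _)
    (entry_norm_bound_of_unitary U.2 _ _)

lemma measurable_mul_conjTranspose_apply (i j : m) :
    Measurable fun p : unitaryGroup m ℂ × unitaryGroup m ℂ =>
      ((p.1 : Matrix m m ℂ) * (p.2 : Matrix m m ℂ)ᴴ) i j := by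
  simp only [mul_apply, conjTranspose_apply]
  exact Finset.measurable_sum _ fun k _ =>
    ((measurable_unitaryGroup_apply i k).comp measurable_fst).mul
      (continuous_star.measurable.comp ((measurable_unitaryGroup_apply j k).comp measurable_snd))

lemma norm_mul_conjTranspose_apply_le_one (U V : unitaryGroup m ℂ) (i j : m) :
    ‖((U : Matrix m m ℂ) * (V : Matrix m m ℂ)ᴴ) i j‖ ≤ 1 :=
  entry_norm_bound_of_unitary (mul_mem U.2 (Unitary.star_mem V.2)) i j

lemma integrable_iSup_iSup_sq_norm_mul_conjTranspose_apply {μ ν : Measure (unitaryGroup m ℂ)}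
    [IsFiniteMeasure μ] [IsFiniteMeasure ν] :
    Integrable (fun p : unitaryGroup m ℂ × unitaryGroup m ℂ =>
      ⨆ i, ⨆ j, ‖((p.1 : Matrix m m ℂ) * (p.2 : Matrix m m ℂ)ᴴ) i j‖ ^ 2)
      (μ.prod ν) := by
  refine .of_bound (Measurable.iSup fun i => Measurable.iSup fun j =>
    ((measurable_mul_conjTranspose_apply i j).norm.pow_const 2)).aestronglyMeasurable 1
    (ae_of_all _ fun p => ?_)
  rw [Real.norm_of_nonneg (Real.iSup_nonneg fun i => Real.iSup_nonneg fun j => by positivity)]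
  refine Real.iSup_le (fun i => Real.iSup_le (fun j => ?_) zero_le_one) zero_le_one
  exact pow_le_one₀ (norm_nonneg _) (norm_mul_conjTranspose_apply_le_one p.1 p.2 i j)

end UnitaryGroup

/-- For any distribution `𝒰` over `U(2ⁿ)` and any (measurable) `g : U(2ⁿ) → {0,1}ⁿ`,
`‖M(g;𝒰)‖_F² ≤ E_{U₁,U₂∼𝒰}[max_{z₁,z₂} |⟨z₁|U₁U₂†|z₂⟩|²]`. -/
theorem frobSq_Mmat_le
    (n : ℕ) (μ : Measure (Matrix.unitaryGroup (BV n) ℂ)) [IsProbabilityMeasure μ]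
    (g : Matrix.unitaryGroup (BV n) ℂ → BV n) (hg : Measurable g) :
    frobSq (Mmat μ g)
      ≤ ∫ p, (⨆ z₁ : BV n, ⨆ z₂ : BV n,
            ‖((p.1 : Matrix (BV n) (BV n) ℂ) * ((p.2 : Matrix (BV n) (BV n) ℂ))ᴴ) z₁ z₂‖ ^ 2)
          ∂(μ.prod μ) := by
  set f : BV n → BV n → unitaryGroup (BV n) ℂ → ℂ :=
    fun i j U => conj ((U : Matrix (BV n) (BV n) ℂ) (g U) i) * (U : Matrix _ _ ℂ) (g U) j
  have hMmat : ∀ i j, Mmat μ g i j = ∫ U, f i j U ∂μ := fun i j => by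
    simp only [Mmat, conjTranspose_mul_single_mul_apply, f, Complex.star_def]
  have hf : ∀ i j, Integrable (f i j) μ := integrable_conj_apply_row_mul_apply_row hg
  have hprod : ∀ i j,
      Integrable (fun p => RCLike.re (f i j p.1 * conj (f i j p.2))) (μ.prod μ) :=
    fun i j => (hf i j).mul_conj_prod.re
  calc frobSq (Mmat μ g)
      = ∑ i, ∑ j, ∫ p, RCLike.re (f i j p.1 * conj (f i j p.2)) ∂(μ.prod μ) := by
        simp only [frobSq, hMmat, sq_norm_integral_eq_integral_prod (hf _ _)]
    _ = ∫ p, ∑ i, ∑ j, RCLike.re (f i j p.1 * conj (f i j p.2)) ∂(μ.prod μ) := by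
        rw [integral_finsetSum _ fun i _ => integrable_finsetSum _ fun j _ => hprod i j]
        exact Finset.sum_congr rfl fun i _ => (integral_finsetSum _ fun j _ => hprod i j).symm
    _ = ∫ p, ‖((p.1 : Matrix (BV n) (BV n) ℂ) * (p.2 : Matrix (BV n) (BV n) ℂ)ᴴ)
          (g p.1) (g p.2)‖ ^ 2 ∂(μ.prod μ) := by
        congr with p
        simp only [mul_apply, conjTranspose_apply, RCLike.star_def]
        exact RCLike.sum_sum_re_mul_conj_eq_sq_norm_sum _ _
    _ ≤ _ := integral_mono_of_nonneg (ae_of_all _ fun _ => by positivity)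
        integrable_iSup_iSup_sq_norm_mul_conjTranspose_apply
        (ae_of_all _ fun p => le_ciSup₂_of_finite (fun z₁ z₂ => ‖((p.1 : Matrix (BV n) (BV n) ℂ) *
          (p.2 : Matrix (BV n) (BV n) ℂ)ᴴ) z₁ z₂‖ ^ 2) _ _)
end
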